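/- arXiv:2208.08488 — 2 statements merged into one kernel-verified Lean document; each statement's English description precedes it below -/
import Mathlib

section
/- For every n ≥ 1, the square of the path, P_n^2, is odd prime. -/
/-- A simple graph `G` of order `n` is *odd prime* if there is an injective labeling
of its vertices by odd integers from `{1, 3, ..., 2n-1}` such that the labels of
adjacent vertices are relatively prime. -/
def IsOddPrime {V : Type*} [Fintype V] (G : SimpleGraph V) : Prop :=
  ∃ ℓ : V → ℕ, Function.Injective ℓ ∧
    (∀ v, Odd (ℓ v) ∧ ℓ v ≤ 2 * Fintype.card V - 1) ∧
    ∀ u v, G.Adj u v → Nat.Coprime (ℓ u) (ℓ v)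

/-- The square of the path, `P_n^2`: vertices `v_0, ..., v_{n-1}` with edges between
vertices whose indices differ by 1 or 2. -/
def pathSquared (n : ℕ) : SimpleGraph (Fin n) :=
  SimpleGraph.fromRel (fun a b => b.val = a.val + 1 ∨ b.val = a.val + 2)

lemma cop_aux (a k : ℕ) (hk : k = 2 ∨ k = 4) : Nat.Coprime (2 * a + 1) (2 * a + 1 + k) := by
  set d := Nat.gcd (2 * a + 1) (2 * a + 1 + k) with hd
  have h1 : d ∣ 2 * a + 1 := Nat.gcd_dvd_left _ _
  have h2 : d ∣ k := by
    have h := Nat.dvd_sub (Nat.gcd_dvd_right (2 * a + 1) (2 * a + 1 + k)) h1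
    rw [← hd, Nat.add_sub_cancel_left] at h
    exact h
  have hd4 : d ∣ 4 := by
    rcases hk with h | h
    · subst h; exact h2.trans ⟨2, rfl⟩
    · subst h; exact h2
  have hle : d ≤ 4 := Nat.le_of_dvd (by norm_num) hd4
  have hpos : 1 ≤ d := Nat.pos_of_dvd_of_pos h1 (by omega)
  interval_cases d
  · exact hd.symm
  · obtain ⟨c, hc⟩ := h1; omega
  · exact absurd hd4 (by norm_num)
  · obtain ⟨c, hc⟩ := h1; omega

lemma cop2 (x y : ℕ) (h : y = x + 1 ∨ y = x + 2) : Nat.Coprime (2 * x + 1) (2 * y + 1) := by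
  rcases h with h | h <;> subst h
  · have := cop_aux x 2 (Or.inl rfl)
    have e : 2 * x + 1 + 2 = 2 * (x + 1) + 1 := by ring
    rwa [e] at this
  · have := cop_aux x 4 (Or.inr rfl)
    have e : 2 * x + 1 + 4 = 2 * (x + 2) + 1 := by ring
    rwa [e] at this

/-- For every `n ≥ 1`, the square of the path `P_n^2` is odd prime. -/
theorem pathSquared_oddPrime (n : ℕ) (hn : 1 ≤ n) : IsOddPrime (pathSquared n) := by
  refine ⟨fun i => 2 * i.val + 1, ?_, ?_, ?_⟩
  · intro a b h
    have h' : 2 * a.val + 1 = 2 * b.val + 1 := h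
    have : a.val = b.val := by omega
    exact Fin.val_injective this
  · intro v
    refine ⟨⟨v.val, by ring⟩, ?_⟩
    have := v.isLt
    simp only [Fintype.card_fin]
    omega
  · intro u v huv
    rw [pathSquared, SimpleGraph.fromRel_adj] at huv
    obtain ⟨hne, hor⟩ := huv
    rcases hor with (h | h) | (h | h)
    · exact cop2 u.val v.val (Or.inl h)
    · exact cop2 u.val v.val (Or.inr h)
    · exact (cop2 v.val u.val (Or.inl h)).symm
    · exact (cop2 v.val u.val (Or.inr h)).symm
end

section
/- For n ≥ 5, the square of the cycle, C_n^2, is odd prime if and only if n is not congruent to 2 modulo 3. -/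
/-- The square of the cycle, `C_n^2`: vertices `v_0, ..., v_{n-1}` with edges between
vertices whose indices differ by 1 or 2 modulo `n`. -/
def cycleSquared (n : ℕ) : SimpleGraph (Fin n) :=
  SimpleGraph.fromRel (fun a b =>
    b.val = (a.val + 1) % n ∨ b.val = (a.val + 2) % n)

lemma odd_coprime_two (a : ℕ) : Nat.Coprime (2*a+1) 2 :=
  Nat.coprime_two_right.mpr ⟨a, by ring⟩

lemma cop2_s19 (a : ℕ) : Nat.Coprime (2*a+1) (2*a+3) := by
  have h : 2*a+3 = 2 + (2*a+1) := by ring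
  rw [h, Nat.coprime_add_self_right]
  exact odd_coprime_two a

lemma cop4 (a : ℕ) : Nat.Coprime (2*a+1) (2*a+5) := by
  have h : 2*a+5 = 4 + (2*a+1) := by ring
  rw [h, Nat.coprime_add_self_right]
  have h4 : (4:ℕ) = 2^2 := by norm_num
  rw [h4]
  exact Nat.Coprime.pow_right 2 (odd_coprime_two a)

lemma key_cop (n a b : ℕ) (hn : 5 ≤ n) (h3 : n % 3 ≠ 2) (ha : a < n)
    (h : b = (a+1) % n ∨ b = (a+2) % n) : Nat.Coprime (2*a+1) (2*b+1) := by
  rcases h with h | h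
  · rcases Nat.lt_or_ge (a+1) n with hlt | hge
    · rw [Nat.mod_eq_of_lt hlt] at h
      have hb : 2*b+1 = 2*a+3 := by omega
      rw [hb]; exact cop2_s19 a
    · have han : a + 1 = n := by omega
      have hb : b = 0 := by rw [h, han, Nat.mod_self]
      rw [hb]
      exact Nat.coprime_one_right _
  · rcases Nat.lt_or_ge (a+2) n with hlt | hge
    · rw [Nat.mod_eq_of_lt hlt] at h
      have hb : 2*b+1 = 2*a+5 := by omega
      rw [hb]; exact cop4 a
    · rcases Nat.lt_or_ge (a+2) (n+1) with hlt2 | hge2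
      · have han : a + 2 = n := by omega
        have hb : b = 0 := by rw [h, han, Nat.mod_self]
        rw [hb]
        exact Nat.coprime_one_right _
      · have han : a + 2 = n + 1 := by omega
        have hb : b = 1 := by
          rw [h, han]
          have : (n + 1) % n = 1 % n := Nat.add_mod_left n 1
          rw [this, Nat.mod_eq_of_lt (by omega)]
        rw [hb]
        have h31 : (2*b+1 : ℕ) = 3 := by omega
        rw [Nat.coprime_comm]
        have : (2*(1:ℕ)+1) = 3 := by norm_num
        rw [this]
        refine (Nat.Prime.coprime_iff_not_dvd (by norm_num)).mpr ?_
        omega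

lemma mod_shift_ne {n a d : ℕ} (hn : 5 ≤ n) (ha : a < n) (hd1 : 1 ≤ d) (hd2 : d ≤ 2) :
    (a + d) % n ≠ a := by
  rcases Nat.lt_or_ge (a+d) n with h | h
  · rw [Nat.mod_eq_of_lt h]; omega
  · have : (a+d) % n = a + d - n := by
      rw [Nat.mod_eq_sub_mod h, Nat.mod_eq_of_lt (by omega)]
    omega

lemma adj_of_shift {n : ℕ} (u v : Fin n) (huv : u ≠ v) (d : ℕ) (hd : d = 1 ∨ d = 2)
    (h : v.val = (u.val + d) % n) : (cycleSquared n).Adj u v := by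
  rw [cycleSquared, SimpleGraph.fromRel_adj]
  refine ⟨huv, Or.inl ?_⟩
  rcases hd with hd | hd
  · left; rw [← hd]; exact h
  · right; rw [← hd]; exact h

/-- For `n ≥ 5`, the square of the cycle `C_n^2` is odd prime if and only if `n` is
not congruent to 2 modulo 3. -/
theorem cycleSquared_oddPrime_iff (n : ℕ) (hn : 5 ≤ n) :
    IsOddPrime (cycleSquared n) ↔ ¬ n % 3 = 2 := by
  constructor
  · rintro ⟨ℓ, hinj, hbd, hcop⟩ h2
    -- n = 3k+2
    set k := n / 3 with hk
    have hn2 : n = 3 * k + 2 := by omega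
    -- labels form exactly the set of odd numbers below 2n
    set T : Finset ℕ := (Finset.range n).image (fun i => 2*i+1) with hT
    set S : Finset ℕ := Finset.univ.image ℓ with hS
    have hsub : S ⊆ T := by
      intro m hm
      rw [hS, Finset.mem_image] at hm
      obtain ⟨v, -, hv⟩ := hm
      obtain ⟨⟨i, hi⟩, hle⟩ := hbd v
      rw [Fintype.card_fin] at hle
      rw [hT, Finset.mem_image]
      exact ⟨i, Finset.mem_range.mpr (by omega), by omega⟩
    have hcardT : T.card = n := by
      rw [hT, Finset.card_image_of_injective _ (fun x y h => by omega), Finset.card_range]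
    have hcardS : S.card = n := by
      rw [hS, Finset.card_image_of_injective _ hinj, Finset.card_univ, Fintype.card_fin]
    have hST : S = T := Finset.eq_of_subset_of_card_le hsub (by omega)
    -- choose vertices labeled 6j+3
    have hex : ∀ j : Fin (k+1), ∃ v : Fin n, ℓ v = 6 * j.val + 3 := by
      intro j
      have hmem : 6 * j.val + 3 ∈ T := by
        rw [hT, Finset.mem_image]
        refine ⟨3 * j.val + 1, Finset.mem_range.mpr ?_, by ring⟩
        have := j.isLt
        omega
      rw [← hST, hS, Finset.mem_image] at hmem
      obtain ⟨v, -, hv⟩ := hmem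
      exact ⟨v, hv⟩
    choose w hw using hex
    have hnpos : 0 < n := by omega
    -- key step: contradiction from two multiples of 3 being adjacent
    have hnotadj : ∀ j j' : Fin (k+1), ¬ (cycleSquared n).Adj (w j) (w j') := by
      intro j j' hadj
      have hc := hcop _ _ hadj
      rw [hw j, hw j'] at hc
      have h3 : (3:ℕ) ∣ Nat.gcd (6 * j.val + 3) (6 * j'.val + 3) :=
        Nat.dvd_gcd ⟨2 * j.val + 1, by ring⟩ ⟨2 * j'.val + 1, by ring⟩
      rw [hc] at h3
      omega
    -- build an injection Fin (k+1) × Fin 3 → Fin n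
    have hshift : ∀ (j j' : Fin (k+1)) (d : ℕ), d = 1 ∨ d = 2 →
        (w j).val = ((w j').val + d) % n → False := by
      intro j j' d hd heq
      have hne : w j' ≠ w j := by
        intro he
        rw [← he] at heq
        exact mod_shift_ne hn (w j').isLt (by omega) (by omega) heq.symm
      exact hnotadj j' j (adj_of_shift (w j') (w j) hne d hd heq)
    set F : Fin (k+1) × Fin 3 → Fin n :=
      fun p => ⟨((w p.1).val + p.2.val) % n, Nat.mod_lt _ hnpos⟩ with hF
    have hFinj : Function.Injective F := by
      rintro ⟨j, t⟩ ⟨j', t'⟩ h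
      have heq : ((w j).val + t.val) % n = ((w j').val + t'.val) % n :=
        congrArg Fin.val h
      have ht3 : t.val < 3 := t.isLt
      have ht3' : t'.val < 3 := t'.isLt
      rcases Nat.lt_trichotomy t.val t'.val with hlt | heqt | hgt
      · exfalso
        set d := t'.val - t.val with hd
        have hrw : (w j').val + t'.val = ((w j').val + d) + t.val := by omega
        rw [hrw] at heq
        have hm : (w j).val ≡ (w j').val + d [MOD n] :=
          Nat.ModEq.add_right_cancel' t.val heq
        have : (w j).val = ((w j').val + d) % n := by
          have h' : (w j).val % n = ((w j').val + d) % n := hm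
          rwa [Nat.mod_eq_of_lt (w j).isLt] at h'
        exact hshift j j' d (by omega) this
      · rw [← heqt] at heq
        have hm : (w j).val ≡ (w j').val [MOD n] :=
          Nat.ModEq.add_right_cancel' t.val heq
        have hww : w j = w j' := by
          apply Fin.ext
          have h' : (w j).val % n = (w j').val % n := hm
          rwa [Nat.mod_eq_of_lt (w j).isLt, Nat.mod_eq_of_lt (w j').isLt] at h'
        have hj : j = j' := by
          have := hw j
          rw [hww, hw j'] at this
          exact Fin.ext (by omega)
        have ht : t = t' := Fin.ext heqt
        rw [hj, ht]
      · exfalso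
        set d := t.val - t'.val with hd
        have hrw : (w j).val + t.val = ((w j).val + d) + t'.val := by omega
        rw [hrw] at heq
        have hm : (w j).val + d ≡ (w j').val [MOD n] :=
          Nat.ModEq.add_right_cancel' t'.val heq
        have : (w j').val = ((w j).val + d) % n := by
          have h' : ((w j).val + d) % n = (w j').val % n := hm
          rw [Nat.mod_eq_of_lt (w j').isLt] at h'
          exact h'.symm
        exact hshift j' j d (by omega) this
    have hcard := Fintype.card_le_of_injective F hFinj
    simp [Fintype.card_prod, Fintype.card_fin] at hcard
    omega
  · intro h3
    refine ⟨fun v => 2 * v.val + 1, ?_, ?_, ?_⟩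
    · intro u v h
      have h' : 2 * u.val + 1 = 2 * v.val + 1 := h
      exact Fin.ext (by omega)
    · intro v
      constructor
      · show Odd (2 * v.val + 1)
        exact ⟨v.val, by ring⟩
      · show 2 * v.val + 1 ≤ 2 * Fintype.card (Fin n) - 1
        rw [Fintype.card_fin]
        have := v.isLt
        omega
    · intro u v hadj
      rw [cycleSquared, SimpleGraph.fromRel_adj] at hadj
      obtain ⟨hne, hr | hr⟩ := hadj
      · exact key_cop n u.val v.val hn h3 u.isLt hr
      · exact Nat.coprime_comm.mp (key_cop n v.val u.val hn h3 v.isLt hr)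
end
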